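/- Let C be a category with pullbacks of split epimorphisms along split epimorphisms, kernel pairs and finite products. Then C is naturally Mal'tsev if and only if every directed kite in C is admissible. -/

import Mathlib

open CategoryTheory

universe v u

section Defs

variable {C : Type u} [Category.{v} C]

/-- A pair of morphisms with common domain is jointly monic. -/
def JointlyMonic {E A B : C} (p1 : E ⟶ A) (p2 : E ⟶ B) : Prop :=
  ∀ {Z : C} (u v : Z ⟶ E), u ≫ p1 = v ≫ p1 → u ≫ p2 = v ≫ p2 → u = v

/-- `(P, p1, p2)` is a pullback of `f` and `g`. -/
structure IsPb {P A B X : C} (p1 : P ⟶ A) (p2 : P ⟶ B) (f : A ⟶ X) (g : B ⟶ X) : Prop where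
  comm : p1 ≫ f = p2 ≫ g
  univ : ∀ {Z : C} (a : Z ⟶ A) (b : Z ⟶ B), a ≫ f = b ≫ g →
    ∃! l : Z ⟶ P, l ≫ p1 = a ∧ l ≫ p2 = b

/-- The data of a span `(D, d, c)` with `d : D ⟶ D0` and `c : D ⟶ D1`. -/
structure SpanData (C : Type u) [Category.{v} C] where
  D : C
  D0 : C
  D1 : C
  d : D ⟶ D0
  c : D ⟶ D1

/-- The morphism `d` admits a kernel pair. -/
def HasKernelPair {D D0 : C} (d : D ⟶ D0) : Prop :=
  ∃ (K : C) (k1 k2 : K ⟶ D), IsPb k1 k2 d d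

/-- The (raw) data of a directed kite. -/
structure DiKite (C : Type u) [Category.{v} C] where
  A : C
  B : C
  Cc : C
  D : C
  D0 : C
  D1 : C
  f : A ⟶ B
  r : B ⟶ A
  g : Cc ⟶ B
  s : B ⟶ Cc
  α : A ⟶ D
  β : B ⟶ D
  γ : Cc ⟶ D
  d : D ⟶ D0
  c : D ⟶ D1

/-- The directed kite axioms. -/
def DiKite.IsKite (K : DiKite C) : Prop :=
  K.r ≫ K.f = 𝟙 K.B ∧ K.s ≫ K.g = 𝟙 K.B ∧
  K.r ≫ K.α = K.β ∧ K.s ≫ K.γ = K.β ∧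
  K.α ≫ K.d = K.f ≫ K.β ≫ K.d ∧
  K.g ≫ K.β ≫ K.c = K.γ ≫ K.c

/-- The direction span of a directed kite. -/
def DiKite.spanPart (K : DiKite C) : SpanData C := ⟨K.D, K.D0, K.D1, K.d, K.c⟩

/-- `m` is a multiplication for the directed kite `K`,
relative to pullback projections `π1`, `π2` of `K.f`, `K.g`. -/
def IsMult (K : DiKite C) {P : C} (π1 : P ⟶ K.A) (π2 : P ⟶ K.Cc) (m : P ⟶ K.D) : Prop :=
  (∀ e1 : K.A ⟶ P, e1 ≫ π1 = 𝟙 K.A → e1 ≫ π2 = K.f ≫ K.s → e1 ≫ m = K.α) ∧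
  (∀ e2 : K.Cc ⟶ P, e2 ≫ π1 = K.g ≫ K.r → e2 ≫ π2 = 𝟙 K.Cc → e2 ≫ m = K.γ) ∧
  m ≫ K.d = π2 ≫ K.γ ≫ K.d ∧
  m ≫ K.c = π1 ≫ K.α ≫ K.c

/-- The directed kite `K` is admissible: it has exactly one multiplication. -/
def DiKite.Admissible (K : DiKite C) : Prop :=
  ∀ {P : C} (π1 : P ⟶ K.A) (π2 : P ⟶ K.Cc), IsPb π1 π2 K.f K.g →
    ∃! m : P ⟶ K.D, IsMult K π1 π2 m

/-- `(e1, p1, e2, p2)` is a local product. -/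
def IsLocalProduct {A Cc E : C} (e1 : A ⟶ E) (p1 : E ⟶ A) (e2 : Cc ⟶ E) (p2 : E ⟶ Cc) :
    Prop :=
  ∃ (B : C) (f : A ⟶ B) (r : B ⟶ A) (g : Cc ⟶ B) (s : B ⟶ Cc),
    r ≫ f = 𝟙 B ∧ s ≫ g = 𝟙 B ∧ IsPb p1 p2 f g ∧
    e1 ≫ p1 = 𝟙 A ∧ e1 ≫ p2 = f ≫ s ∧ e2 ≫ p1 = g ≫ r ∧ e2 ≫ p2 = 𝟙 Cc

/-- `(T, dom, mid, cod)` is the object of compatible triples of the span `(D, d, c)`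
(the kernel pair construction). -/
structure IsTripleObj {D D0 D1 : C} (d : D ⟶ D0) (c : D ⟶ D1) {T : C}
    (dom mid cod : T ⟶ D) : Prop where
  d_dom : dom ≫ d = mid ≫ d
  c_mid : mid ≫ c = cod ≫ c
  univ : ∀ {Z : C} (x y z : Z ⟶ D), x ≫ d = y ≫ d → y ≫ c = z ≫ c →
    ∃! l : Z ⟶ T, l ≫ dom = x ∧ l ≫ mid = y ∧ l ≫ cod = z

/-- `(Bx, q1, q2, q3, q4)` is the box object of the span `(D, d, c)`. -/
structure IsBoxObj {D D0 D1 : C} (d : D ⟶ D0) (c : D ⟶ D1) {Bx : C}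
    (q1 q2 q3 q4 : Bx ⟶ D) : Prop where
  h12 : q1 ≫ d = q2 ≫ d
  h23 : q2 ≫ c = q3 ≫ c
  h34 : q3 ≫ d = q4 ≫ d
  h41 : q4 ≫ c = q1 ≫ c
  univ : ∀ {Z : C} (x y z w : Z ⟶ D), x ≫ d = y ≫ d → y ≫ c = z ≫ c →
    z ≫ d = w ≫ d → w ≫ c = x ≫ c →
    ∃! l : Z ⟶ Bx, l ≫ q1 = x ∧ l ≫ q2 = y ∧ l ≫ q3 = z ∧ l ≫ q4 = w

/-- A natural pregroupoid structure on the span `(D, d, c)`. -/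
structure PregroupoidStr {D D0 D1 : C} (d : D ⟶ D0) (c : D ⟶ D1) where
  p : ∀ {Z : C} (x y z : Z ⟶ D), x ≫ d = y ≫ d → y ≫ c = z ≫ c → (Z ⟶ D)
  natural : ∀ {Z' Z : C} (h : Z' ⟶ Z) (x y z : Z ⟶ D)
    (hd : x ≫ d = y ≫ d) (hc : y ≫ c = z ≫ c)
    (hd' : (h ≫ x) ≫ d = (h ≫ y) ≫ d) (hc' : (h ≫ y) ≫ c = (h ≫ z) ≫ c),
    p (h ≫ x) (h ≫ y) (h ≫ z) hd' hc' = h ≫ p x y z hd hc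
  comp_d : ∀ {Z : C} (x y z : Z ⟶ D) (hd : x ≫ d = y ≫ d) (hc : y ≫ c = z ≫ c),
    p x y z hd hc ≫ d = z ≫ d
  comp_c : ∀ {Z : C} (x y z : Z ⟶ D) (hd : x ≫ d = y ≫ d) (hc : y ≫ c = z ≫ c),
    p x y z hd hc ≫ c = x ≫ c
  p_xyy : ∀ {Z : C} (x y : Z ⟶ D) (hd : x ≫ d = y ≫ d) (hc : y ≫ c = y ≫ c),
    p x y y hd hc = x
  p_yyz : ∀ {Z : C} (y z : Z ⟶ D) (hd : y ≫ d = y ≫ d) (hc : y ≫ c = z ≫ c),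
    p y y z hd hc = z

/-- Associativity of a pregroupoid structure. -/
def PregroupoidStr.Assoc {D D0 D1 : C} {d : D ⟶ D0} {c : D ⟶ D1}
    (P : PregroupoidStr d c) : Prop :=
  ∀ {Z : C} (u v x y z : Z ⟶ D)
    (huv : u ≫ d = v ≫ d) (hvx : v ≫ c = x ≫ c)
    (hxy : x ≫ d = y ≫ d) (hyz : y ≫ c = z ≫ c)
    (h1 : v ≫ c = (P.p x y z hxy hyz) ≫ c)
    (h2 : (P.p u v x huv hvx) ≫ d = y ≫ d),
    P.p u v (P.p x y z hxy hyz) huv h1 = P.p (P.p u v x huv hvx) y z h2 hyz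

end Defs

/-- `C` has pullbacks of split epimorphisms along split epimorphisms. -/
def HasPbSplit (C : Type u) [Category.{v} C] : Prop :=
  ∀ {A B Cc : C} (f : A ⟶ B) (r : B ⟶ A) (g : Cc ⟶ B) (s : B ⟶ Cc),
    r ≫ f = 𝟙 B → s ≫ g = 𝟙 B →
    ∃ (P : C) (p1 : P ⟶ A) (p2 : P ⟶ Cc), IsPb p1 p2 f g

/-- The class `M` contains the span part of every local product. -/
def ContainsLocalProducts {C : Type u} [Category.{v} C] (M : Set (SpanData C)) : Prop :=
  ∀ {A B Cc E : C} (f : A ⟶ B) (r : B ⟶ A) (g : Cc ⟶ B) (s : B ⟶ Cc)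
    (p1 : E ⟶ A) (p2 : E ⟶ Cc),
    r ≫ f = 𝟙 B → s ≫ g = 𝟙 B → IsPb p1 p2 f g →
    SpanData.mk E A Cc p1 p2 ∈ M

/-- The class `M` is closed under the kernel pair construction. -/
def ClosedUnderKP {C : Type u} [Category.{v} C] (M : Set (SpanData C)) : Prop :=
  ∀ S ∈ M, ∀ {T : C} (dom mid cod : T ⟶ S.D),
    IsTripleObj S.d S.c dom mid cod → SpanData.mk T S.D S.D dom cod ∈ M

open CategoryTheory.Limits in
/-- `C` is naturally Mal'tsev: every object carries a natural Mal'tsev operation. -/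
def NaturallyMaltsev (C : Type u) [Category.{v} C] [HasFiniteProducts C] : Prop :=
  ∃ p : ∀ X : C, (X ⨯ (X ⨯ X)) ⟶ X,
    (∀ {X Y : C} (f : X ⟶ Y), p X ≫ f = prod.map f (prod.map f f) ≫ p Y) ∧
    (∀ {S X : C} (x y z : S ⟶ X),
      prod.lift x (prod.lift y y) ≫ p X = x ∧
      prod.lift y (prod.lift y z) ≫ p X = z)

section Aux

open CategoryTheory.Limits

variable {C : Type u} [Category.{v} C]

attribute [local simp] prod.lift_fst prod.lift_snd prod.lift_fst_assoc prod.lift_snd_assoc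

lemma IsPb.jm {P A B X : C} {p1 : P ⟶ A} {p2 : P ⟶ B} {f : A ⟶ X} {g : B ⟶ X}
    (h : IsPb p1 p2 f g) {Z : C} (u v : Z ⟶ P)
    (h1 : u ≫ p1 = v ≫ p1) (h2 : u ≫ p2 = v ≫ p2) : u = v := by
  obtain ⟨l, -, hu⟩ := h.univ (u ≫ p1) (u ≫ p2)
    (by rw [Category.assoc, Category.assoc, h.comm])
  rw [hu u ⟨rfl, rfl⟩, hu v ⟨h1.symm, h2.symm⟩]

variable [HasFiniteProducts C]

/-- The standard kite on `X` with values in `Y`. -/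
noncomputable def mkKite {X Y : C} (h : X ⟶ Y) : DiKite C where
  A := X ⨯ X
  B := X
  Cc := X ⨯ X
  D := Y
  D0 := ⊤_ C
  D1 := ⊤_ C
  f := prod.snd
  r := prod.lift (𝟙 X) (𝟙 X)
  g := prod.fst
  s := prod.lift (𝟙 X) (𝟙 X)
  α := prod.fst ≫ h
  β := h
  γ := prod.snd ≫ h
  d := terminal.from Y
  c := terminal.from Y

lemma mkKite_isKite {X Y : C} (h : X ⟶ Y) : (mkKite h).IsKite := by
  refine ⟨?_, ?_, ?_, ?_, ?_, ?_⟩ <;> simp [mkKite]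

/-- first projection of the triple pullback -/
noncomputable def tp1 (X : C) : (X ⨯ (X ⨯ X)) ⟶ X ⨯ X :=
  prod.lift prod.fst (prod.snd ≫ prod.fst)

/-- second projection of the triple pullback -/
noncomputable def tp2 (X : C) : (X ⨯ (X ⨯ X)) ⟶ X ⨯ X :=
  prod.snd

lemma isPbTriple (X : C) :
    IsPb (tp1 X) (tp2 X) (prod.snd : X ⨯ X ⟶ X) (prod.fst : X ⨯ X ⟶ X) := by
  constructor
  · simp [tp1, tp2]
  · intro Z a b hab
    refine ⟨prod.lift (a ≫ prod.fst) b, ⟨?_, ?_⟩, ?_⟩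
    · apply Limits.prod.hom_ext <;> simp [tp1, hab.symm]
    · simp [tp2]
    · rintro l ⟨h1, h2⟩
      apply Limits.prod.hom_ext
      · have := congrArg (fun t => t ≫ (prod.fst : X ⨯ X ⟶ X)) h1
        simpa [tp1] using this
      · simpa [tp2] using h2

/-- canonical first section of the triple pullback -/
noncomputable def te1 (X : C) : (X ⨯ X) ⟶ X ⨯ (X ⨯ X) :=
  prod.lift prod.fst (prod.lift prod.snd prod.snd)

/-- canonical second section of the triple pullback -/
noncomputable def te2 (X : C) : (X ⨯ X) ⟶ X ⨯ (X ⨯ X) :=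
  prod.lift prod.fst (𝟙 _)

lemma te1_p1 (X : C) : te1 X ≫ tp1 X = 𝟙 (X ⨯ X) := by
  apply Limits.prod.hom_ext <;> simp [te1, tp1]

lemma te1_p2 {X Y : C} (h : X ⟶ Y) :
    te1 X ≫ tp2 X = (mkKite h).f ≫ (mkKite h).s := by
  apply Limits.prod.hom_ext <;> simp [te1, tp2, mkKite]

lemma te2_p1 {X Y : C} (h : X ⟶ Y) :
    te2 X ≫ tp1 X = (mkKite h).g ≫ (mkKite h).r := by
  apply Limits.prod.hom_ext <;> simp [te2, tp1, mkKite]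

lemma te2_p2 (X : C) : te2 X ≫ tp2 X = 𝟙 (X ⨯ X) := by
  simp [te2, tp2]

lemma forward_dir (h : NaturallyMaltsev C) :
    ∀ K : DiKite C, K.IsKite → K.Admissible := by
  obtain ⟨p, pnat, pids⟩ := h
  intro K hk P π1 π2 hpb
  obtain ⟨hrf, hsg, hrα, hsγ, hαd, hgβc⟩ := hk
  -- canonical sections of the pullback
  obtain ⟨i1, ⟨hi1a, hi1b⟩, -⟩ := hpb.univ (𝟙 K.A) (K.f ≫ K.s)
    (by rw [Category.id_comp, Category.assoc, hsg, Category.comp_id])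
  obtain ⟨i2, ⟨hi2a, hi2b⟩, -⟩ := hpb.univ (K.g ≫ K.r) (𝟙 K.Cc)
    (by rw [Category.id_comp, Category.assoc, hrf, Category.comp_id])
  set m : P ⟶ K.D :=
    prod.lift (π1 ≫ K.α) (prod.lift (π2 ≫ K.g ≫ K.β) (π2 ≫ K.γ)) ≫ p K.D with hm
  have hmult : IsMult K π1 π2 m := by
    refine ⟨?_, ?_, ?_, ?_⟩
    · intro e1 h1 h2
      have : e1 ≫ m =
          prod.lift K.α (prod.lift (K.f ≫ K.β) (K.f ≫ K.β)) ≫ p K.D := by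
        rw [hm, ← Category.assoc]
        congr 1
        apply Limits.prod.hom_ext
        · simp [reassoc_of% h1]
        · apply Limits.prod.hom_ext <;>
            simp [reassoc_of% h2, reassoc_of% hsg, hsγ]
      rw [this, (pids K.α (K.f ≫ K.β) (K.f ≫ K.β)).1]
    · intro e2 h1 h2
      have : e2 ≫ m =
          prod.lift (K.g ≫ K.β) (prod.lift (K.g ≫ K.β) K.γ) ≫ p K.D := by
        rw [hm, ← Category.assoc]
        congr 1
        apply Limits.prod.hom_ext
        · simp [reassoc_of% h1, hrα]
        · apply Limits.prod.hom_ext <;> simp [reassoc_of% h2]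
      rw [this, (pids (K.g ≫ K.β) (K.g ≫ K.β) K.γ).2]
    · rw [hm, Category.assoc, pnat K.d, ← Category.assoc, prod.lift_map,
        prod.lift_map]
      have h1 : (π1 ≫ K.α) ≫ K.d = (π2 ≫ K.g ≫ K.β) ≫ K.d := by
        rw [Category.assoc, hαd, ← Category.assoc, hpb.comm]
        simp only [Category.assoc]
      rw [h1, (pids ((π2 ≫ K.g ≫ K.β) ≫ K.d) ((π2 ≫ K.g ≫ K.β) ≫ K.d)
        ((π2 ≫ K.γ) ≫ K.d)).2, Category.assoc]
    · rw [hm, Category.assoc, pnat K.c, ← Category.assoc, prod.lift_map,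
        prod.lift_map]
      have h1 : (π2 ≫ K.g ≫ K.β) ≫ K.c = (π2 ≫ K.γ) ≫ K.c := by
        simp only [Category.assoc, hgβc]
      rw [h1, (pids ((π1 ≫ K.α) ≫ K.c) ((π2 ≫ K.γ) ≫ K.c)
        ((π2 ≫ K.γ) ≫ K.c)).1, Category.assoc]
  refine ⟨m, hmult, ?_⟩
  intro m' hm'
  -- decomposition of the identity of P
  have hi1m : i1 ≫ m' = K.α := hm'.1 i1 hi1a hi1b
  have hi2m : i2 ≫ m' = K.γ := hm'.2.1 i2 hi2a hi2b
  set L : P ⟶ P ⨯ (P ⨯ P) :=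
    prod.lift (π1 ≫ i1) (prod.lift (π2 ≫ K.g ≫ K.r ≫ i1) (π2 ≫ i2)) with hL
  have hid : L ≫ p P = 𝟙 P := by
    apply hpb.jm
    · rw [Category.assoc, pnat π1, ← Category.assoc, hL, prod.lift_map,
        prod.lift_map, Category.id_comp]
      have e1 : (π1 ≫ i1) ≫ π1 = π1 := by
        rw [Category.assoc, hi1a, Category.comp_id]
      have e2 : (π2 ≫ K.g ≫ K.r ≫ i1) ≫ π1 = π2 ≫ K.g ≫ K.r := by
        simp only [Category.assoc, hi1a, Category.comp_id]
      have e3 : (π2 ≫ i2) ≫ π1 = π2 ≫ K.g ≫ K.r := by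
        rw [Category.assoc, hi2a]
      rw [e1, e2, e3, (pids π1 (π2 ≫ K.g ≫ K.r) (π2 ≫ K.g ≫ K.r)).1]
    · rw [Category.assoc, pnat π2, ← Category.assoc, hL, prod.lift_map,
        prod.lift_map, Category.id_comp]
      have e1 : (π1 ≫ i1) ≫ π2 = π2 ≫ K.g ≫ K.s := by
        rw [Category.assoc, hi1b, ← Category.assoc, hpb.comm,
          Category.assoc]
      have e2 : (π2 ≫ K.g ≫ K.r ≫ i1) ≫ π2 = π2 ≫ K.g ≫ K.s := by
        simp only [Category.assoc, hi1b]
        rw [reassoc_of% hrf]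
      have e3 : (π2 ≫ i2) ≫ π2 = π2 := by
        rw [Category.assoc, hi2b, Category.comp_id]
      rw [e1, e2, e3, (pids (π2 ≫ K.g ≫ K.s) (π2 ≫ K.g ≫ K.s) π2).2]
  calc m' = (L ≫ p P) ≫ m' := by rw [hid, Category.id_comp]
    _ = L ≫ prod.map m' (prod.map m' m') ≫ p K.D := by
        rw [Category.assoc, pnat m']
    _ = m := by
        rw [← Category.assoc, hL, prod.lift_map, prod.lift_map, hm]
        congr 1
        apply Limits.prod.hom_ext
        · simp [hi1m]
        · apply Limits.prod.hom_ext <;> simp [hi1m, hi2m, hrα]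

lemma backward_dir (hAdm : ∀ K : DiKite C, K.IsKite → K.Admissible) :
    NaturallyMaltsev C := by
  have hmX : ∀ X : C, ∃! m : (X ⨯ (X ⨯ X)) ⟶ X,
      IsMult (mkKite (𝟙 X)) (tp1 X) (tp2 X) m := fun X =>
    hAdm (mkKite (𝟙 X)) (mkKite_isKite _) (tp1 X) (tp2 X) (isPbTriple X)
  refine ⟨fun X => (hmX X).exists.choose, ?_, ?_⟩
  · -- naturality
    intro X Y f
    have specX := (hmX X).exists.choose_spec
    have specY := (hmX Y).exists.choose_spec
    set pX := (hmX X).exists.choose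
    set pY := (hmX Y).exists.choose
    have hu := hAdm (mkKite f) (mkKite_isKite f) (tp1 X) (tp2 X) (isPbTriple X)
    have c1 : IsMult (mkKite f) (tp1 X) (tp2 X) (pX ≫ f) := by
      refine ⟨?_, ?_, ?_, ?_⟩
      · intro e1 h1 h2
        refine (Category.assoc _ _ _).symm.trans ((congrArg (· ≫ f) (specX.1 e1 h1 h2)).trans ?_)
        simp [mkKite]
      · intro e2 h1 h2
        refine (Category.assoc _ _ _).symm.trans ((congrArg (· ≫ f) (specX.2.1 e2 h1 h2)).trans ?_)
        simp [mkKite]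
      · exact terminal.hom_ext _ _
      · exact terminal.hom_ext _ _
    have c2 : IsMult (mkKite f) (tp1 X) (tp2 X)
        (prod.map f (prod.map f f) ≫ pY) := by
      refine ⟨?_, ?_, ?_, ?_⟩
      · intro e1 h1 h2
        have he : e1 = te1 X := by
          apply (isPbTriple X).jm
          · exact h1.trans (te1_p1 X).symm
          · exact h2.trans (te1_p2 (𝟙 X)).symm
        have hswap : te1 X ≫ prod.map f (prod.map f f) =
            prod.map f f ≫ te1 Y := by
          apply Limits.prod.hom_ext
          · simp [te1]
          · apply Limits.prod.hom_ext <;> simp [te1]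
        dsimp only [mkKite] at h1 h2 ⊢
        rw [he, ← Category.assoc, hswap, Category.assoc]
        erw [
          (specY.1 (te1 Y) (te1_p1 Y) (te1_p2 (𝟙 Y)) : te1 Y ≫ pY = prod.fst ≫ 𝟙 Y)]
        simp [mkKite, te1]
      · intro e2 h1 h2
        have he : e2 = te2 X := by
          apply (isPbTriple X).jm
          · exact h1.trans (te2_p1 (𝟙 X)).symm
          · exact h2.trans (te2_p2 X).symm
        have hswap : te2 X ≫ prod.map f (prod.map f f) =
            prod.map f f ≫ te2 Y := by
          apply Limits.prod.hom_ext
          · simp [te2]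
          · apply Limits.prod.hom_ext <;> simp [te2]
        dsimp only [mkKite] at h1 h2 ⊢
        rw [he, ← Category.assoc, hswap, Category.assoc]
        erw [
          (specY.2.1 (te2 Y) (te2_p1 (𝟙 Y)) (te2_p2 Y) : te2 Y ≫ pY = prod.snd ≫ 𝟙 Y)]
        simp [mkKite, te2]
      · exact terminal.hom_ext _ _
      · exact terminal.hom_ext _ _
    exact hu.unique c1 c2
  · -- Mal'tsev identities
    intro S X x y z
    have spec := (hmX X).exists.choose_spec
    set pX := (hmX X).exists.choose
    have h1 : te1 X ≫ pX = prod.fst ≫ 𝟙 X :=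
      spec.1 (te1 X) (te1_p1 X) (te1_p2 (𝟙 X))
    have h2 : te2 X ≫ pX = prod.snd ≫ 𝟙 X :=
      spec.2.1 (te2 X) (te2_p1 (𝟙 X)) (te2_p2 X)
    constructor
    · have : prod.lift x (prod.lift y y) = prod.lift x y ≫ te1 X := by
        apply Limits.prod.hom_ext
        · simp [te1]
        · apply Limits.prod.hom_ext <;> simp [te1]
      rw [this, Category.assoc, h1]
      simp
    · have : prod.lift y (prod.lift y z) = prod.lift y z ≫ te2 X := by
        apply Limits.prod.hom_ext
        · simp [te2]
        · apply Limits.prod.hom_ext <;> simp [te2]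
      rw [this, Category.assoc, h2]
      simp

end Aux

theorem statement14 {C : Type u} [Category.{v} C] [Limits.HasFiniteProducts C]
    (hPb : HasPbSplit C) (hKp : ∀ {X Y : C} (f : X ⟶ Y), HasKernelPair f) :
    NaturallyMaltsev C ↔ ∀ K : DiKite C, K.IsKite → K.Admissible :=
  ⟨forward_dir, backward_dir⟩
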